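/- arXiv:2405.10352 — 2 statements merged into one kernel-verified Lean document; each statement's English description precedes it below -/
import Mathlib

section
/- Let p be a prime and m, n positive natural numbers with m < p^n. Let A be the m×m Jordan block over ZMod p with eigenvalue 1, i.e., A = 1 + J where J is the matrix with entries J i j = 1 when j = i+1 and 0 otherwise. Then the sum of powers 1 + A + A^2 + ... + A^(p^n - 1) equals the zero matrix. -/
/-- The nilpotent upper-triangular Jordan block: entry `(i,j)` is `1` if `j = i + 1`
and `0` otherwise. -/
def jordanNilp (p m : ℕ) : Matrix (Fin m) (Fin m) (ZMod p) :=
  Matrix.of fun i j => if (j : ℕ) = (i : ℕ) + 1 then 1 else 0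

lemma jordanNilp_pow (p m k : ℕ) (i j : Fin m) :
    (jordanNilp p m ^ k) i j = if (j : ℕ) = (i : ℕ) + k then 1 else 0 := by
  induction k generalizing i j with
  | zero =>
    simp [Matrix.one_apply, Fin.ext_iff, eq_comm]
  | succ k ih =>
    rw [pow_succ, Matrix.mul_apply]
    have hrw : ∀ x : Fin m, (jordanNilp p m ^ k) i x * jordanNilp p m x j
        = (if (x : ℕ) = (i : ℕ) + k then 1 else 0) *
          (if (j : ℕ) = (x : ℕ) + 1 then 1 else 0) := by
      intro x; rw [ih]; rfl
    simp only [hrw]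
    by_cases h : (j : ℕ) = (i : ℕ) + k + 1
    · have hk : (i : ℕ) + k < m := by omega
      rw [Finset.sum_eq_single_of_mem (⟨(i : ℕ) + k, hk⟩ : Fin m) (Finset.mem_univ _)]
      · simp [h, Nat.add_assoc]
      · intro b _ hb
        have : (b : ℕ) ≠ (i : ℕ) + k := fun hc => hb (Fin.ext hc)
        simp [this]
    · rw [if_neg (by omega : ¬ (j : ℕ) = (i : ℕ) + (k + 1))]
      apply Finset.sum_eq_zero
      intro b _
      by_cases hb : (b : ℕ) = (i : ℕ) + k
      · have : (j : ℕ) ≠ (b : ℕ) + 1 := by omega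
        simp [this]
      · simp [hb]

lemma jordanNilp_pow_eq_zero (p m k : ℕ) (hk : m ≤ k) : jordanNilp p m ^ k = 0 := by
  ext i j
  rw [jordanNilp_pow]
  have : (j : ℕ) ≠ (i : ℕ) + k := by have := j.isLt; omega
  simp [this]

lemma sum_range_choose_hockey (N i : ℕ) (hiN : i < N) :
    ∑ k ∈ Finset.range N, Nat.choose k i = Nat.choose N (i + 1) := by
  have hsub : Finset.Icc i (N - 1) ⊆ Finset.range N := by
    intro x hx
    simp only [Finset.mem_Icc] at hx
    simp only [Finset.mem_range]
    omega
  have := Finset.sum_subset hsub (f := fun k => Nat.choose k i) ?_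
  · rw [← this, Nat.sum_Icc_choose]
    congr 1
    omega
  · intro x hx hx'
    simp only [Finset.mem_Icc, Finset.mem_range] at hx hx'
    exact Nat.choose_eq_zero_of_lt (by omega)

theorem sum_powers_jordan_block_eq_zero (p m n : ℕ) [Fact p.Prime]
    (hm : 0 < m) (hn : 0 < n) (hmn : m < p ^ n)
    (A : Matrix (Fin m) (Fin m) (ZMod p)) (hA : A = 1 + jordanNilp p m) :
    ∑ k ∈ Finset.range (p ^ n), A ^ k = 0 := by
  set J := jordanNilp p m with hJ
  set N := p ^ n with hN
  have hmN : m ≤ N := hmn.le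
  have expand : ∀ k, A ^ k
      = ∑ i ∈ Finset.range N,
          J ^ i * ((Nat.choose k i : ℕ) : Matrix (Fin m) (Fin m) (ZMod p)) := by
    intro k
    rw [hA, add_comm, (Commute.one_right J).add_pow]
    simp only [one_pow, mul_one]
    have h1 : ∑ i ∈ Finset.range (k + 1),
          J ^ i * ((Nat.choose k i : ℕ) : Matrix (Fin m) (Fin m) (ZMod p))
        = ∑ i ∈ Finset.range (max (k + 1) N),
          J ^ i * ((Nat.choose k i : ℕ) : Matrix (Fin m) (Fin m) (ZMod p)) := by
      apply Finset.sum_subset (Finset.range_subset_range.2 (le_max_left _ _))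
      intro i _ hi
      rw [Finset.mem_range, not_lt] at hi
      rw [Nat.choose_eq_zero_of_lt (by omega)]
      simp
    have h2 : ∑ i ∈ Finset.range N,
          J ^ i * ((Nat.choose k i : ℕ) : Matrix (Fin m) (Fin m) (ZMod p))
        = ∑ i ∈ Finset.range (max (k + 1) N),
          J ^ i * ((Nat.choose k i : ℕ) : Matrix (Fin m) (Fin m) (ZMod p)) := by
      apply Finset.sum_subset (Finset.range_subset_range.2 (le_max_right _ _))
      intro i _ hi
      rw [Finset.mem_range, not_lt] at hi
      rw [hJ, jordanNilp_pow_eq_zero p m i (le_trans hmN hi)]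
      simp
    rw [h1, h2]
  calc ∑ k ∈ Finset.range N, A ^ k
      = ∑ k ∈ Finset.range N, ∑ i ∈ Finset.range N,
          J ^ i * ((Nat.choose k i : ℕ) : Matrix (Fin m) (Fin m) (ZMod p)) :=
        Finset.sum_congr rfl fun k _ => expand k
    _ = ∑ i ∈ Finset.range N,
          J ^ i * (((∑ k ∈ Finset.range N, Nat.choose k i : ℕ)) :
            Matrix (Fin m) (Fin m) (ZMod p)) := by
        rw [Finset.sum_comm]
        refine Finset.sum_congr rfl fun i _ => ?_
        rw [Nat.cast_sum, Finset.mul_sum]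
    _ = 0 := by
        apply Finset.sum_eq_zero
        intro i hi
        rw [Finset.mem_range] at hi
        rcases le_or_gt m i with h | h
        · rw [hJ, jordanNilp_pow_eq_zero p m i h, zero_mul]
        · rw [sum_range_choose_hockey N i hi]
          have hdvd : p ∣ Nat.choose N (i + 1) :=
            Nat.Prime.dvd_choose_pow Fact.out (by omega) (by rw [← hN]; omega)
          haveI : Nonempty (Fin m) := ⟨⟨0, hm⟩⟩
          haveI : CharP (Matrix (Fin m) (Fin m) (ZMod p)) p := Matrix.charP p
          rw [(CharP.cast_eq_zero_iff _ p _).2 hdvd, mul_zero]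
end

section
/- Let p be a prime, n a positive natural number, and m = p^n. Let A be the m×m Jordan block over ZMod p with eigenvalue 1, i.e., A = 1 + J where J is the matrix with entries J i j = 1 when j = i+1 and 0 otherwise. Then ∑_{k=0}^{p^n - 1} A^k equals the matrix E having a single entry 1 in position (0, m-1) (the top-right corner) and 0 elsewhere; equivalently, ∑_{k=0}^{p^n - 1} A^k = J^(p^n - 1) = stdBasisMatrix 0 (m-1) 1. -/
open Finset Polynomial

theorem Polynomial.geom_sum_one_add_X_expChar_pow {R : Type*} [CommRing R] (p n : ℕ)
    [ExpChar R p] :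
    ∑ k ∈ range (p ^ n), (1 + X : R[X]) ^ k = X ^ (p ^ n - 1) := by
  have hpos : 0 < p ^ n := pow_pos (expChar_pos R p) n
  apply isRegular_X.right
  calc (∑ k ∈ range (p ^ n), (1 + X : R[X]) ^ k) * X
      = (1 + X) ^ p ^ n - 1 := by rw [← geom_sum_mul, add_sub_cancel_left]
    _ = X ^ (p ^ n - 1) * X := by
      rw [add_pow_expChar_pow, one_pow, add_sub_cancel_left, ← pow_succ,
        Nat.sub_add_cancel hpos]

theorem geom_sum_one_add_expChar_pow {R S : Type*} [CommRing R] [Ring S] [Algebra R S]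
    (p n : ℕ) [ExpChar R p] (x : S) :
    ∑ k ∈ range (p ^ n), (1 + x) ^ k = x ^ (p ^ n - 1) := by
  simpa using congrArg (aeval x) (geom_sum_one_add_X_expChar_pow (R := R) p n)

theorem jordanNilp_pow_apply (p m k : ℕ) (i j : Fin m) :
    (jordanNilp p m ^ k) i j = if (j : ℕ) = i + k then 1 else 0 := by
  induction k generalizing j with
  | zero => simp [Matrix.one_apply, Fin.ext_iff, eq_comm]
  | succ k ih =>
    simp only [pow_succ, Matrix.mul_apply, ih]
    simp only [jordanNilp, Matrix.of_apply, ite_mul, one_mul, zero_mul]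
    by_cases h : (i : ℕ) + k < m
    · simp only [← Fin.ext_iff (b := ⟨i + k, h⟩), Fintype.sum_ite_eq', add_assoc]
    · rw [if_neg (by omega), Finset.sum_eq_zero]
      intro l _
      rw [if_neg (by omega)]

theorem jordanNilp_pow_pred (p m : ℕ) (hm0 : 0 < m) :
    jordanNilp p m ^ (m - 1)
      = Matrix.single (⟨0, hm0⟩ : Fin m) ⟨m - 1, Nat.sub_lt hm0 one_pos⟩ 1 := by
  ext i j
  rw [jordanNilp_pow_apply, Matrix.single_apply]
  exact if_congr (by simp only [Fin.ext_iff]; omega) rfl rfl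

theorem sum_powers_jordan_block_eq_corner_general (p n m : ℕ) [Fact p.Prime]
    (hm : m = p ^ n) (hm0 : 0 < m)
    (A : Matrix (Fin m) (Fin m) (ZMod p)) (hA : A = 1 + jordanNilp p m) :
    ∑ k ∈ Finset.range (p ^ n), A ^ k = (jordanNilp p m) ^ (p ^ n - 1) ∧
    ∑ k ∈ Finset.range (p ^ n), A ^ k
      = Matrix.single (⟨0, hm0⟩ : Fin m)
          (⟨m - 1, Nat.sub_lt hm0 one_pos⟩ : Fin m) (1 : ZMod p) := by
  have hsum : ∑ k ∈ range (p ^ n), A ^ k = jordanNilp p m ^ (p ^ n - 1) :=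
    hA ▸ geom_sum_one_add_expChar_pow (R := ZMod p) p n _
  refine ⟨hsum, hsum.trans ?_⟩
  subst hm
  exact jordanNilp_pow_pred p _ hm0

theorem sum_powers_jordan_block_eq_corner (p n m : ℕ) [Fact p.Prime]
    (hn : 0 < n) (hm : m = p ^ n) (hm0 : 0 < m)
    (A : Matrix (Fin m) (Fin m) (ZMod p)) (hA : A = 1 + jordanNilp p m) :
    ∑ k ∈ Finset.range (p ^ n), A ^ k = (jordanNilp p m) ^ (p ^ n - 1) ∧
    ∑ k ∈ Finset.range (p ^ n), A ^ k
      = Matrix.single (⟨0, hm0⟩ : Fin m)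
          (⟨m - 1, Nat.sub_lt hm0 one_pos⟩ : Fin m) (1 : ZMod p) :=
  sum_powers_jordan_block_eq_corner_general p n m hm hm0 A hA
end
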